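/- For C₂ ≠ 0, C₃ > 0 and n > 0, the adjusted MSE g(h) = C₂² h⁶ + C₃/(nh) on (0,∞) attains its unique minimum at h* = (C₃/(6C₂²))^{1/7}·n^{−1/7}. -/
import Mathlib

lemma amgm7_key (x y : ℝ) (hx : 0 < x) (hy : 0 < y) (hne : x ≠ y) :
    7 * y ^ 6 * x < x ^ 7 + 6 * y ^ 7 := by
  have hsq : 0 < (x - y) ^ 2 := pow_two_pos_of_ne_zero (sub_ne_zero.mpr hne)
  have hQ : 0 < x ^ 5 + 2 * x ^ 4 * y + 3 * x ^ 3 * y ^ 2 + 4 * x ^ 2 * y ^ 3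
      + 5 * x * y ^ 4 + 6 * y ^ 5 := by positivity
  nlinarith [mul_pos hsq hQ]

/-- For `C₂ ≠ 0`, `C₃ > 0` and `n > 0`, the adjusted MSE `g(h) = C₂² h⁶ + C₃/(nh)`
on `(0,∞)` attains its unique minimum at `h* = (C₃/(6C₂²))^{1/7}·n^{−1/7}`. -/
theorem adjusted_mse_optimal_bandwidth (C2 C3 n : ℝ) (hC2 : C2 ≠ 0) (hC3 : 0 < C3)
    (hn : 0 < n) :
    let g : ℝ → ℝ := fun h => C2 ^ 2 * h ^ 6 + C3 / (n * h)
    let hstar : ℝ := (C3 / (6 * C2 ^ 2)) ^ ((1 : ℝ) / 7) * n ^ (-(1 : ℝ) / 7)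
    (∀ h ∈ Set.Ioi (0:ℝ), g hstar ≤ g h) ∧
    (∀ h ∈ Set.Ioi (0:ℝ), h ≠ hstar → g hstar < g h) := by
  intro g hstar
  have hC2sq : 0 < C2 ^ 2 := by positivity
  have hA : 0 < C3 / (6 * C2 ^ 2) := by positivity
  have hy : 0 < hstar := by
    have h1 : 0 < (C3 / (6 * C2 ^ 2)) ^ ((1 : ℝ) / 7) := Real.rpow_pos_of_pos hA _
    have h2 : 0 < n ^ (-(1 : ℝ) / 7) := Real.rpow_pos_of_pos hn _
    exact mul_pos h1 h2
  have h7 : hstar ^ 7 = C3 / (6 * C2 ^ 2) * n⁻¹ := by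
    show ((C3 / (6 * C2 ^ 2)) ^ ((1 : ℝ) / 7) * n ^ (-(1 : ℝ) / 7)) ^ 7 = _
    rw [mul_pow, ← Real.rpow_natCast ((C3 / (6 * C2 ^ 2)) ^ ((1 : ℝ) / 7)) 7,
      ← Real.rpow_natCast (n ^ (-(1 : ℝ) / 7)) 7, ← Real.rpow_mul hA.le,
      ← Real.rpow_mul hn.le]
    norm_num
    exact Or.inl (Real.rpow_neg_one n)
  have hC3eq : C3 = 6 * C2 ^ 2 * n * hstar ^ 7 := by
    rw [h7]; field_simp
  have hstrict : ∀ h ∈ Set.Ioi (0:ℝ), h ≠ hstar → g hstar < g h := by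
    intro h hh hne
    simp only [Set.mem_Ioi] at hh
    have key := amgm7_key h hstar hh hy hne
    have h2 : 0 < C2 ^ 2 * (h ^ 7 + 6 * hstar ^ 7 - 7 * hstar ^ 6 * h) / h :=
      div_pos (mul_pos hC2sq (by linarith)) hh
    have h3 : C2 ^ 2 * (h ^ 7 + 6 * hstar ^ 7 - 7 * hstar ^ 6 * h) / h
        = (C2 ^ 2 * h ^ 6 + C3 / (n * h)) - (C2 ^ 2 * hstar ^ 6 + C3 / (n * hstar)) := by
      rw [hC3eq]; field_simp; ring
    show C2 ^ 2 * hstar ^ 6 + C3 / (n * hstar) < C2 ^ 2 * h ^ 6 + C3 / (n * h)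
    linarith [h3 ▸ h2]
  refine ⟨fun h hh => ?_, hstrict⟩
  by_cases he : h = hstar
  · simp [he]
  · exact (hstrict h hh he).le
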